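/- arXiv:1809.08996 — 3 statements merged into one kernel-verified Lean document; each statement's English description precedes it below -/
import Mathlib

section
/- The function ρ(x₁,…,xₙ) = Σ_{1≤r<s≤n} |x_r − x_s| on ℝⁿ (n ≥ 3) is a generalized n-metric on ℝ; in particular it satisfies the rectangle inequality ρ(x₁,x₂,…,xₙ) ≤ ρ(x₁,a,…,a) + ρ(a,x₂,…,xₙ) for all x₁,…,xₙ,a ∈ ℝ. -/
/-- A generalized `n`-metric on a set `X` (for `n ≥ 3`), following Khan. -/
structure IsGenNMetric {X : Type*} (n : ℕ) (hn : 3 ≤ n) (G : (Fin n → X) → ℝ) : Prop where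
  /-- values are nonnegative -/
  nonneg : ∀ x : Fin n → X, 0 ≤ G x
  /-- (G1) vanishing on constant tuples -/
  vanish : ∀ x : X, G (fun _ => x) = 0
  /-- (G2) positivity: `G(x₁,…,x₁,x₂) > 0` whenever `x₁ ≠ x₂` -/
  pos : ∀ x y : X, x ≠ y → 0 < G (fun i => if i.val = n - 1 then y else x)
  /-- (G3) `G(x₁,…,x₁,x₂) ≤ G(x₁,…,xₙ)` when at least two of `x₂,…,xₙ` are distinct -/
  le : ∀ x : Fin n → X,
    (∃ i j : Fin n, i ≠ ⟨0, by omega⟩ ∧ j ≠ ⟨0, by omega⟩ ∧ x i ≠ x j) →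
    G (fun i => if i.val = n - 1 then x ⟨1, by omega⟩ else x ⟨0, by omega⟩) ≤ G x
  /-- (G4) permutation invariance -/
  perm : ∀ (x : Fin n → X) (σ : Equiv.Perm (Fin n)), G (x ∘ σ) = G x
  /-- (G5) rectangle inequality: `G(x₁,…,xₙ) ≤ G(x₁,a,…,a) + G(a,x₂,…,xₙ)` -/
  rect : ∀ (x : Fin n → X) (a : X),
    G x ≤ G (fun i => if i.val = 0 then x ⟨0, by omega⟩ else a)
          + G (Function.update x ⟨0, by omega⟩ a)

/-!
Doubling `ρ` gives the full double sum `∑ r, ∑ s, d(x r, x s)`, which is visibly invariant under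
permutations. If `i ≠ j`, the triangle inequality bounds the rows `i` and `j` of that double sum
together by `n · d(x i, x j)` and every other row by `d(x i, x j)`, so `ρ x ≥ (n - 1) d(x i, x j)`;
a tuple that is constant except at one entry attains this bound, which gives (G2) and (G3).
The rectangle inequality holds pair by pair: a pair through the first point is split by the
triangle inequality through `a`, and every other pair reappears unchanged in `ρ(a, x₂, …, xₙ)`.
-/

open Finset Function

theorem two_nsmul_sum_filter_lt_eq_sum_sum {ι M : Type*} [Fintype ι] [LinearOrder ι]
    [AddCommMonoid M] (f : ι → ι → M) (hsymm : ∀ r s, f s r = f r s) (hdiag : ∀ r, f r r = 0) :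
    2 • ∑ p ∈ univ.filter (fun p : ι × ι => p.1 < p.2), f p.1 p.2 = ∑ r, ∑ s, f r s := by
  have hsplit : ∀ p : ι × ι, f p.1 p.2 =
      (if p.1 < p.2 then f p.1 p.2 else 0) + (if p.2 < p.1 then f p.1 p.2 else 0) := by
    rintro ⟨r, s⟩
    rcases lt_trichotomy r s with h | rfl | h
    · simp [h, h.not_gt]
    · simp [hdiag]
    · simp [h, h.not_gt]
  have hswap : ∑ p : ι × ι, (if p.2 < p.1 then f p.1 p.2 else 0) =
      ∑ p : ι × ι, (if p.1 < p.2 then f p.1 p.2 else 0) :=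
    Fintype.sum_equiv (Equiv.prodComm ι ι) _ _ fun p => by simp [hsymm]
  rw [← Fintype.sum_prod_type', Fintype.sum_congr _ _ hsplit, sum_add_distrib, hswap,
    sum_filter, two_nsmul]

theorem Fintype.sum_comp_update_const {ι X : Type*} [Fintype ι] [DecidableEq ι]
    (g : X → ℝ) (a b : X) (k : ι) :
    ∑ s, g (update (fun _ => a) k b s) = g b + (Fintype.card ι - 1 : ℝ) * g a := by
  rw [← comp_def g, comp_update, sum_update_of_mem (mem_univ k)]
  simp [card_sdiff, Nat.cast_pred (Fintype.card_pos_iff.2 ⟨k⟩)]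

section PairwiseDistSum

variable {X ι : Type*} [PseudoMetricSpace X] [Fintype ι] [LinearOrder ι]

def pairwiseDistSum (x : ι → X) : ℝ :=
  ∑ p ∈ univ.filter (fun p : ι × ι => p.1 < p.2), dist (x p.1) (x p.2)

theorem two_mul_pairwiseDistSum (x : ι → X) :
    2 * pairwiseDistSum x = ∑ r, ∑ s, dist (x r) (x s) := by
  rw [two_mul, ← two_nsmul]
  exact two_nsmul_sum_filter_lt_eq_sum_sum _ (fun r s => dist_comm (x s) (x r))
    fun r => dist_self _

theorem pairwiseDistSum_comp_perm (x : ι → X) (σ : Equiv.Perm ι) :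
    pairwiseDistSum (x ∘ σ) = pairwiseDistSum x := by
  have h : 2 * pairwiseDistSum (x ∘ σ) = 2 * pairwiseDistSum x := by
    rw [two_mul_pairwiseDistSum, two_mul_pairwiseDistSum]
    exact (Fintype.sum_congr _ _ fun r => Equiv.sum_comp σ fun s => dist (x (σ r)) (x s)).trans
      (Equiv.sum_comp σ fun r => ∑ s, dist (x r) (x s))
  linarith

theorem pairwiseDistSum_update_const (a b : X) (k : ι) :
    pairwiseDistSum (update (fun _ => a) k b) = (Fintype.card ι - 1) * dist a b := by
  have h := two_mul_pairwiseDistSum (update (fun _ => a) k b)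
  simp only [Fintype.sum_comp_update_const (dist _), sum_add_distrib, ← mul_sum,
    Fintype.sum_comp_update_const (dist · b), Fintype.sum_comp_update_const (dist · a)] at h
  simp only [dist_self, dist_comm b a] at h
  linarith

theorem mul_dist_le_pairwiseDistSum (x : ι → X) {i j : ι} (hij : i ≠ j) :
    (Fintype.card ι - 1) * dist (x i) (x j) ≤ pairwiseDistSum x := by
  set d := dist (x i) (x j)
  set row : ι → ℝ := fun r => ∑ s, dist (x r) (x s)
  have hrow : ∀ r, d ≤ row r := fun r => calc
    d ≤ dist (x r) (x i) + dist (x r) (x j) := dist_triangle_left _ _ _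
    _ = ∑ s ∈ {i, j}, dist (x r) (x s) := (sum_pair (f := fun s => dist (x r) (x s)) hij).symm
    _ ≤ row r := sum_le_sum_of_subset_of_nonneg (subset_univ _) fun _ _ _ => dist_nonneg
  have hpair : Fintype.card ι * d ≤ row i + row j := calc
    Fintype.card ι * d = ∑ _s : ι, d := by simp
    _ ≤ ∑ s, (dist (x i) (x s) + dist (x j) (x s)) :=
      sum_le_sum fun s _ => dist_triangle_right _ _ _
    _ = row i + row j := sum_add_distrib
  have hrest : ∑ r ∈ {i, j}, (row r - d) ≤ ∑ r, (row r - d) :=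
    sum_le_sum_of_subset_of_nonneg (subset_univ _) fun r _ _ => sub_nonneg.2 (hrow r)
  rw [sum_pair hij, sum_sub_distrib, ← two_mul_pairwiseDistSum] at hrest
  simp only [sum_const, card_univ, nsmul_eq_mul] at hrest
  linarith

theorem pairwiseDistSum_le_update_add (x : ι → X) (k : ι) (a : X) :
    pairwiseDistSum x ≤
      pairwiseDistSum (update (fun _ => a) k (x k)) + pairwiseDistSum (update x k a) := by
  rw [pairwiseDistSum, pairwiseDistSum, pairwiseDistSum, ← sum_add_distrib]
  refine sum_le_sum fun p _ => ?_
  obtain ⟨r, s⟩ := p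
  by_cases hr : r = k <;> by_cases hs : s = k
  · simp [hr, hs]
  · subst hr; simpa [hs] using dist_triangle (x r) a (x s)
  · subst hs; simpa [hr, add_comm] using dist_triangle (x r) a (x s)
  · simp [hr, hs]

end PairwiseDistSum

theorem Fin.ite_val_eq_eq_update {α : Type*} {n : ℕ} (k : Fin n) (a b : α) :
    (fun i : Fin n => if i.val = k.val then b else a) = update (fun _ => a) k b := by
  ext i
  simp [update_apply, Fin.ext_iff]

theorem isGenNMetric_pairwiseDistSum {X : Type*} [MetricSpace X] (n : ℕ) (hn : 3 ≤ n) :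
    IsGenNMetric n hn (pairwiseDistSum : (Fin n → X) → ℝ) where
  nonneg x := sum_nonneg fun _ _ => dist_nonneg
  vanish x := by simp [pairwiseDistSum]
  pos x y hxy := by
    rw [Fin.ite_val_eq_eq_update ⟨n - 1, by omega⟩, pairwiseDistSum_update_const,
      Fintype.card_fin]
    have : (1 : ℝ) < n := by exact_mod_cast (by omega : 1 < n)
    exact mul_pos (by linarith) (dist_pos.2 hxy)
  le x _ := by
    have h := mul_dist_le_pairwiseDistSum x (i := ⟨0, by omega⟩) (j := ⟨1, by omega⟩)
      (by simp [Fin.ext_iff])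
    rwa [Fin.ite_val_eq_eq_update ⟨n - 1, by omega⟩, pairwiseDistSum_update_const]
  perm := pairwiseDistSum_comp_perm
  rect x a := by
    rw [Fin.ite_val_eq_eq_update ⟨0, by omega⟩]
    exact pairwiseDistSum_le_update_add x _ a

/-- `ρ(x₁,…,xₙ) = Σ_{r<s} |x_r − x_s|` is a generalized `n`-metric on `ℝ`;
in particular it satisfies the rectangle inequality. -/
theorem stmt0 (n : ℕ) (hn : 3 ≤ n) :
    IsGenNMetric n hn
      (fun x : Fin n → ℝ =>
        ∑ p ∈ Finset.univ.filter (fun p : Fin n × Fin n => p.1 < p.2), |x p.1 - x p.2|) :=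
  -- `dist x y` on `ℝ` unfolds to `|x - y|`
  isGenNMetric_pairwiseDistSum n hn
end

section
/- Let (X,M,*) be a fuzzy metric space (in the sense of George–Veeramani) with * the product t-norm, and define F₃(x,y,z,t) = M(x,y,t)·M(x,z,t)·M(y,z,t). Then F₃ satisfies the tetrahedral inequality F₃(x,y,z,t+s) ≥ F₃(x,w,w,t)·F₃(w,y,z,s) for all x,y,z,w ∈ X and t,s > 0. -/
/-- A fuzzy metric space in the sense of George and Veeramani: `star` is a
continuous t-norm and `M : X × X × (0,∞) → [0,1]` satisfies (FM1)–(FM5). -/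
structure IsFuzzyMetric {X : Type*} (star : ℝ → ℝ → ℝ) (M : X → X → ℝ → ℝ) : Prop where
  /-- values lie in `[0,1]` -/
  mem : ∀ (x y : X) (t : ℝ), 0 < t → M x y t ∈ Set.Icc (0:ℝ) 1
  /-- (FM1) positivity -/
  pos : ∀ (x y : X) (t : ℝ), 0 < t → 0 < M x y t
  /-- (FM2) `M(x,y,t) = 1` iff `x = y` -/
  eq_one_iff : ∀ (x y : X) (t : ℝ), 0 < t → (M x y t = 1 ↔ x = y)
  /-- (FM3) symmetry -/
  symm : ∀ (x y : X) (t : ℝ), 0 < t → M x y t = M y x t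
  /-- (FM4) triangle inequality -/
  tri : ∀ (x y z : X) (t s : ℝ), 0 < t → 0 < s → star (M x y t) (M y z s) ≤ M x z (t + s)
  /-- (FM5) continuity in `t` on `(0,∞)` -/
  cont : ∀ x y : X, ContinuousOn (M x y) (Set.Ioi 0)

/-!
Expand `F₃(x,w,w,t)·F₃(w,y,z,s)` as `(M(x,w,t)·M(w,y,s))·(M(x,w,t)·M(w,z,s))·M(y,z,s)·M(w,w,t)`.
Since `M(w,w,t) = 1`, each of the three remaining factors is bounded by the corresponding factor
of `F₃(x,y,z,t+s)`: the first two by the triangle inequality through `w`, the last by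
monotonicity in `t`, which for the product t-norm is the triangle inequality through `y`.
-/

namespace IsFuzzyMetric

variable {X : Type*} {star : ℝ → ℝ → ℝ} {M : X → X → ℝ → ℝ} {t s : ℝ}

theorem apply_self (hM : IsFuzzyMetric star M) (x : X) (ht : 0 < t) : M x x t = 1 :=
  (hM.eq_one_iff x x t ht).2 rfl

theorem nonneg (hM : IsFuzzyMetric star M) (x y : X) (ht : 0 < t) : 0 ≤ M x y t :=
  (hM.pos x y t ht).le

theorem apply_le_apply_add (hM : IsFuzzyMetric (· * ·) M) (x y : X) (ht : 0 < t) (hs : 0 < s) :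
    M x y s ≤ M x y (t + s) := by
  simpa [hM.apply_self x ht] using hM.tri x x y t s ht hs

end IsFuzzyMetric

theorem stmt10_general {X : Type*} (M : X → X → ℝ → ℝ)
    (hM : IsFuzzyMetric (fun a b => a * b) M)
    (x y z w : X) (t s : ℝ) (ht : 0 < t) (hs : 0 < s) :
    (M x w t * M x w t * M w w t) * (M w y s * M w z s * M y z s)
      ≤ M x y (t + s) * M x z (t + s) * M y z (t + s) := by
  have hts : 0 < t + s := add_pos ht hs
  have hxy := hM.tri x w y t s ht hs
  have hxz := hM.tri x w z t s ht hs
  have hyz := hM.apply_le_apply_add y z ht hs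
  calc (M x w t * M x w t * M w w t) * (M w y s * M w z s * M y z s)
      = (M x w t * M w y s) * (M x w t * M w z s) * M y z s := by
        rw [hM.apply_self w ht]; ring
    _ ≤ M x y (t + s) * M x z (t + s) * M y z (t + s) :=
        mul_le_mul
          (mul_le_mul hxy hxz (mul_nonneg (hM.nonneg x w ht) (hM.nonneg w z hs))
            (hM.nonneg x y hts))
          hyz (hM.nonneg y z hs) (mul_nonneg (hM.nonneg x y hts) (hM.nonneg x z hts))

/-- for a fuzzy metric space `(X,M,·)` with the product t-norm and
`F₃(x,y,z,t) = M(x,y,t)·M(x,z,t)·M(y,z,t)`, the tetrahedral inequality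
`F₃(x,y,z,t+s) ≥ F₃(x,w,w,t)·F₃(w,y,z,s)` holds. -/
theorem stmt10 {X : Type*} (M : X → X → ℝ → ℝ)
    (hM : IsFuzzyMetric (fun a b => a * b) M)
    (hmono : ∀ (x y : X) (t s : ℝ), 0 < t → t ≤ s → M x y t ≤ M x y s)
    (x y z w : X) (t s : ℝ) (ht : 0 < t) (hs : 0 < s) :
    (M x w t * M x w t * M w w t) * (M w y s * M w z s * M y z s)
      ≤ M x y (t + s) * M x z (t + s) * M y z (t + s) :=
  stmt10_general M hM x y z w t s ht hs
end

section
/- Let X = [a,b] with K > |a| > 0 and define M(x,y) = ∏_{l=1}^{3} (min{x(l),y(l)}+K)/(max{x(l),y(l)}+K) for x,y ∈ X³. Then M is a stationary fuzzy metric on X³ with the product t-norm: M(x,y) ∈ (0,1], M(x,y)=1 iff x=y, M(x,y)=M(y,x), and M(x,z) ≥ M(x,y)·M(y,z). -/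
/-- The Morillas fuzzy metric on RGB-type vectors in `[a,b]³`:
`M(x,y) = ∏_{l=1}^{3} (min{x(l),y(l)}+K)/(max{x(l),y(l)}+K)`. -/
noncomputable def morillasM (K : ℝ) (x y : Fin 3 → ℝ) : ℝ :=
  ∏ l : Fin 3, (min (x l) (y l) + K) / (max (x l) (y l) + K)

/-!
Each factor of `M` is `min p q / max p q = exp (-|log p - log q|)` with `p = x(l) + K > 0`,
so `M(x,y) = exp (-d(x,y))`, where `d` is the `ℓ¹` distance between the coordinatewise
logarithms of `x + K` and `y + K`. The fuzzy-metric axioms of `M` are then the metric axioms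
of `d` read through `exp (-·)`; in particular the product t-norm inequality is the triangle
inequality of `d`.
-/

open Real

lemma min_div_max_eq_exp_neg_abs_log_sub {p q : ℝ} (hp : 0 < p) (hq : 0 < q) :
    min p q / max p q = exp (-|log p - log q|) := by
  rcases le_total p q with hpq | hqp
  · have hlog : log p ≤ log q := log_le_log hp hpq
    rw [min_eq_left hpq, max_eq_right hpq, abs_of_nonpos (sub_nonpos.2 hlog), neg_neg,
      exp_sub, exp_log hp, exp_log hq]
  · have hlog : log q ≤ log p := log_le_log hq hqp
    rw [min_eq_right hqp, max_eq_left hqp, abs_of_nonneg (sub_nonneg.2 hlog), neg_sub,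
      exp_sub, exp_log hp, exp_log hq]

section LogL1Dist

variable {ι : Type*} [Fintype ι]

noncomputable def logL1Dist (x y : ι → ℝ) : ℝ :=
  ∑ i, |log (x i) - log (y i)|

lemma logL1Dist_nonneg (x y : ι → ℝ) : 0 ≤ logL1Dist x y :=
  Finset.sum_nonneg fun _ _ => abs_nonneg _

lemma logL1Dist_comm (x y : ι → ℝ) : logL1Dist x y = logL1Dist y x :=
  Finset.sum_congr rfl fun _ _ => abs_sub_comm _ _

lemma logL1Dist_triangle (x y z : ι → ℝ) :
    logL1Dist x z ≤ logL1Dist x y + logL1Dist y z := by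
  rw [logL1Dist, logL1Dist, logL1Dist, ← Finset.sum_add_distrib]
  exact Finset.sum_le_sum fun _ _ => abs_sub_le _ _ _

lemma logL1Dist_eq_zero_iff {x y : ι → ℝ} (hx : ∀ i, 0 < x i) (hy : ∀ i, 0 < y i) :
    logL1Dist x y = 0 ↔ x = y := by
  rw [logL1Dist, Finset.sum_eq_zero_iff_of_nonneg fun _ _ => abs_nonneg _, funext_iff]
  refine forall_congr' fun i => ?_
  simp only [Finset.mem_univ, forall_const, abs_eq_zero, sub_eq_zero]
  exact log_injOn_pos.eq_iff (hx i) (hy i)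

end LogL1Dist

lemma morillasM_eq_exp_neg_logL1Dist {K : ℝ} {x y : Fin 3 → ℝ}
    (hx : ∀ l, 0 < x l + K) (hy : ∀ l, 0 < y l + K) :
    morillasM K x y = exp (-logL1Dist (x · + K) (y · + K)) := by
  rw [logL1Dist, ← Finset.sum_neg_distrib, exp_sum, morillasM]
  refine Finset.prod_congr rfl fun l _ => ?_
  rw [← min_add_add_right, ← max_add_add_right]
  exact min_div_max_eq_exp_neg_abs_log_sub (hx l) (hy l)

theorem stmt15_general (a b K : ℝ) (haK : |a| < K)
    (x y z : Fin 3 → ℝ)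
    (hx : ∀ l, x l ∈ Set.Icc a b) (hy : ∀ l, y l ∈ Set.Icc a b)
    (hz : ∀ l, z l ∈ Set.Icc a b) :
    (0 < morillasM K x y ∧ morillasM K x y ≤ 1) ∧
    (morillasM K x y = 1 ↔ x = y) ∧
    morillasM K x y = morillasM K y x ∧
    morillasM K x y * morillasM K y z ≤ morillasM K x z := by
  have shift_pos {u : Fin 3 → ℝ} (hu : ∀ l, u l ∈ Set.Icc a b) (l : Fin 3) : 0 < u l + K := by
    linarith [neg_abs_le a, (hu l).1]
  have hx' := shift_pos hx
  have hy' := shift_pos hy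
  have hz' := shift_pos hz
  rw [morillasM_eq_exp_neg_logL1Dist hx' hy', morillasM_eq_exp_neg_logL1Dist hy' hx',
    morillasM_eq_exp_neg_logL1Dist hy' hz', morillasM_eq_exp_neg_logL1Dist hx' hz',
    exp_eq_one_iff, neg_eq_zero, logL1Dist_eq_zero_iff hx' hy', ← exp_add, exp_le_exp,
    exp_le_one_iff, logL1Dist_comm (y · + K)]
  refine ⟨⟨exp_pos _, neg_nonpos.2 (logL1Dist_nonneg _ _)⟩, ?_, rfl, ?_⟩
  · constructor
    · intro h
      funext l
      simpa using congr_fun h l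
    · rintro rfl
      rfl
  · linarith [logL1Dist_triangle (x · + K) (y · + K) (z · + K)]

/-- for `X = [a,b]` with `K > |a| > 0`, the Morillas function `M` is a
stationary fuzzy metric on `X³` with the product t-norm: `M(x,y) ∈ (0,1]`,
`M(x,y) = 1` iff `x = y`, `M` is symmetric, and `M(x,z) ≥ M(x,y)·M(y,z)`. -/
theorem stmt15 (a b K : ℝ) (haK : |a| < K) (ha : 0 < |a|)
    (x y z : Fin 3 → ℝ)
    (hx : ∀ l, x l ∈ Set.Icc a b) (hy : ∀ l, y l ∈ Set.Icc a b)
    (hz : ∀ l, z l ∈ Set.Icc a b) :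
    (0 < morillasM K x y ∧ morillasM K x y ≤ 1) ∧
    (morillasM K x y = 1 ↔ x = y) ∧
    morillasM K x y = morillasM K y x ∧
    morillasM K x y * morillasM K y z ≤ morillasM K x z :=
  stmt15_general a b K haK x y z hx hy hz
end
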